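/- Let f be homogeneous and g ∈ (f)_{S_d} homogeneous with deg(g) = deg(f). Then f = g' + h where g' consists precisely of the terms of f whose order type appears in g (so g' contains exactly the same order types as g) and h shares no order types with g. Moreover, if g(𝟏) ≠ 0 then g'(𝟏) ≠ 0. -/

import Mathlib

open MvPolynomial

def symOrbit {k : Type*} [CommSemiring k] {d : ℕ} (f : MvPolynomial (Fin d) k) :
    Set (MvPolynomial (Fin d) k) :=
  Set.range (fun σ : Equiv.Perm (Fin d) => rename σ f)

noncomputable def psi {k : Type*} [CommSemiring k] {d : ℕ} (f : MvPolynomial (Fin d) k) :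
    Ideal (MvPolynomial (Fin d) k) :=
  Ideal.span (symOrbit f)

def orderType {d : ℕ} (s : Fin d →₀ ℕ) : Multiset ℕ :=
  Multiset.map (s : Fin d → ℕ) Finset.univ.val

/-- The set of order types appearing among the monomials of `f`. -/
def orderTypes {k : Type*} [CommSemiring k] {d : ℕ} (f : MvPolynomial (Fin d) k) :
    Set (Multiset ℕ) :=
  {t | ∃ m ∈ f.support, orderType m = t}

def sharesOrderType {k : Type*} [CommSemiring k] {d : ℕ}
    (f g : MvPolynomial (Fin d) k) : Prop :=
  ∃ m ∈ f.support, ∃ m' ∈ g.support, orderType m = orderType m'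

/-!
Degree comparison turns an ideal combination of the permuted copies `σ • f` into a
`k`-linear one, `g = ∑ a_σ • σ f`. Keeping only the monomials whose order type lies in
`T = orderTypes g` is a linear projection which commutes with every permutation (order types
are permutation invariant) and fixes `g`; hence `g = ∑ a_σ • σ g'` for the projection `g'`
of `f`. This shows `orderTypes g ⊆ orderTypes g'` and `g(𝟏) = (∑ a_σ) g'(𝟏)`.
-/

lemma orderType_mapDomain_perm {d : ℕ} (σ : Equiv.Perm (Fin d)) (s : Fin d →₀ ℕ) :
    orderType (s.mapDomain σ) = orderType s := by
  have h : ⇑(s.mapDomain σ) = s ∘ σ.symm := funext (Finsupp.mapDomain_equiv_apply s)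
  rw [orderType, orderType, h, ← Multiset.map_map, Multiset.map_univ_val_equiv]

section

attribute [local instance] MvPolynomial.gradedAlgebra

lemma MvPolynomial.homogeneousComponent_mul_of_isHomogeneous {σ R : Type*} [CommSemiring R]
    {n : ℕ} (p : MvPolynomial σ R) {q : MvPolynomial σ R} (hq : q.IsHomogeneous n) :
    homogeneousComponent n (p * q) = C (coeff 0 p) * q := by
  rw [← decomposition.decompose'_apply, ← homogeneousComponent_zero, ← Nat.sub_self n,
    ← decomposition.decompose'_apply]
  exact DirectSum.coe_decompose_mul_of_right_mem_of_le _
    ((mem_homogeneousSubmodule n q).2 hq) le_rfl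

end

lemma MvPolynomial.coeff_rename_equiv {R σ τ : Type*} [CommSemiring R] (e : σ ≃ τ)
    (p : MvPolynomial σ R) (u : τ →₀ ℕ) :
    coeff u (rename e p) = coeff (u.mapDomain e.symm) p := by
  rw [← coeff_rename_mapDomain e e.injective, ← Finsupp.mapDomain_comp]
  simp

section OrderTypePart

variable {k : Type*} [CommSemiring k] {d : ℕ}

lemma exists_eq_sum_smul_rename_of_mem_psi {n : ℕ} {f g : MvPolynomial (Fin d) k}
    (hf : f.IsHomogeneous n) (hg : g.IsHomogeneous n) (hgf : g ∈ psi f) :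
    ∃ a : Equiv.Perm (Fin d) → k, g = ∑ σ, a σ • rename σ f := by
  rw [psi, symOrbit, ← Ideal.submodule_span_eq, Submodule.mem_span_range_iff_exists_fun] at hgf
  obtain ⟨c, rfl⟩ := hgf
  refine ⟨fun σ => coeff 0 (c σ), ?_⟩
  rw [← homogeneousComponent_eq_self hg, map_sum]
  refine Finset.sum_congr rfl fun σ _ => ?_
  rw [smul_eq_mul, homogeneousComponent_mul_of_isHomogeneous _ hf.rename_isHomogeneous, C_mul']

open scoped Classical in
noncomputable def orderTypePart (S : Set (Multiset ℕ)) :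
    MvPolynomial (Fin d) k →ₗ[k] MvPolynomial (Fin d) k where
  toFun p := .ofCoeff ((AddMonoidAlgebra.coeff p).filter (orderType · ∈ S))
  map_add' p q := by
    ext m
    simp only [coeff_add]
    simp only [coeff, Finsupp.filter_apply]
    split_ifs <;> simp
  map_smul' a p := by
    ext m
    simp only [coeff_smul, RingHom.id_apply]
    simp only [coeff, Finsupp.filter_apply]
    split_ifs <;> simp

open scoped Classical in
lemma coeff_orderTypePart (S : Set (Multiset ℕ)) (p : MvPolynomial (Fin d) k) (m : Fin d →₀ ℕ) :
    coeff m (orderTypePart S p) = if orderType m ∈ S then coeff m p else 0 :=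
  rfl

lemma orderTypePart_add_orderTypePart_compl (S : Set (Multiset ℕ)) (p : MvPolynomial (Fin d) k) :
    orderTypePart S p + orderTypePart Sᶜ p = p := by
  classical
  ext m
  rw [coeff_add, coeff_orderTypePart, coeff_orderTypePart, Set.mem_compl_iff]
  split_ifs <;> simp

variable {S : Set (Multiset ℕ)}

lemma orderTypes_orderTypePart_subset (p : MvPolynomial (Fin d) k) :
    orderTypes (orderTypePart S p) ⊆ S := by
  classical
  rintro _ ⟨m, hm, rfl⟩
  rw [mem_support_iff, coeff_orderTypePart] at hm
  by_contra h
  exact hm (if_neg h)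

lemma orderTypes_subset_iff_orderTypePart_eq {p : MvPolynomial (Fin d) k} :
    orderTypes p ⊆ S ↔ orderTypePart S p = p := by
  classical
  constructor
  · intro h
    ext m
    rw [coeff_orderTypePart]
    split_ifs with hm
    · rfl
    · by_contra hne
      exact hm (h ⟨m, mem_support_iff.2 (Ne.symm hne), rfl⟩)
  · intro h
    rw [← h]
    exact orderTypes_orderTypePart_subset p

lemma orderTypePart_rename (σ : Equiv.Perm (Fin d)) (p : MvPolynomial (Fin d) k) :
    orderTypePart S (rename σ p) = rename σ (orderTypePart S p) := by
  classical
  ext m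
  rw [coeff_rename_equiv, coeff_orderTypePart, coeff_orderTypePart, coeff_rename_equiv,
    orderType_mapDomain_perm]

lemma orderTypePart_sum_smul_rename (a : Equiv.Perm (Fin d) → k) (p : MvPolynomial (Fin d) k) :
    orderTypePart S (∑ σ, a σ • rename σ p) = ∑ σ, a σ • rename σ (orderTypePart S p) := by
  simp only [map_sum, map_smul, orderTypePart_rename]

lemma not_sharesOrderType_orderTypePart_compl (p q : MvPolynomial (Fin d) k) :
    ¬ sharesOrderType (orderTypePart (orderTypes q)ᶜ p) q :=
  fun ⟨m, hm, m', hm', h⟩ => orderTypes_orderTypePart_subset p ⟨m, hm, rfl⟩ ⟨m', hm', h.symm⟩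

end OrderTypePart

theorem order_type_split_up {k : Type*} [Field k] {d n : ℕ}
    (f : MvPolynomial (Fin d) k) (hfhom : f.IsHomogeneous n)
    (g : MvPolynomial (Fin d) k) (hg : g ∈ psi f) (hghom : g.IsHomogeneous n) :
    ∃ g' h : MvPolynomial (Fin d) k,
      f = g' + h ∧
      (∀ m ∈ g'.support, orderType m ∈ orderTypes g) ∧
      orderTypes g' = orderTypes g ∧
      ¬ sharesOrderType h g ∧
      (eval (fun _ => (1 : k)) g ≠ 0 → eval (fun _ => (1 : k)) g' ≠ 0) := by
  obtain ⟨a, hga⟩ := exists_eq_sum_smul_rename_of_mem_psi hfhom hghom hg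
  set g' := orderTypePart (orderTypes g) f
  have hgg' : g = ∑ σ, a σ • rename σ g' := by
    rw [← orderTypePart_sum_smul_rename, ← hga]
    exact (orderTypes_subset_iff_orderTypePart_eq.1 subset_rfl).symm
  have hg'g : orderTypes g' ⊆ orderTypes g := orderTypes_orderTypePart_subset f
  refine ⟨g', _, (orderTypePart_add_orderTypePart_compl _ f).symm,
    fun m hm => hg'g ⟨m, hm, rfl⟩, hg'g.antisymm (orderTypes_subset_iff_orderTypePart_eq.2 ?_),
    not_sharesOrderType_orderTypePart_compl f g, fun hg1 hg'1 => hg1 ?_⟩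
  · rw [hgg', orderTypePart_sum_smul_rename, orderTypes_subset_iff_orderTypePart_eq.1 subset_rfl]
  · simp only [hgg', map_sum, smul_eval, eval_rename, Function.comp_def, hg'1, mul_zero,
      Finset.sum_const_zero]
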